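/- arXiv:2011.06311 — 4 statements merged into one kernel-verified Lean document; each statement's English description precedes it below -/
import Mathlib

section
/- The subgroup ⟨φ, B⟩ of the automorphism group of k[x1,x2,x3] is contained in the set of compositions B ∘ {φ_u : u ∈ k} (where φ_0 := id), and ⟨φ, B⟩ ∩ Aff_3(k) = B; in particular, φ_u ∉ Aff_3(k) for every u ∈ k^*. -/
open MvPolynomial

noncomputable section

namespace YasudaPaper

variable {k : Type*} [Field k]

/-- `f := x1*x3 - x2^2` (variables: `X 0 = x1, X 1 = x2, X 2 = x3`). -/
def fP : MvPolynomial (Fin 3) k := X 0 * X 2 - X 1 ^ 2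

/-- `r := x2*f + x1^2`. -/
def rP : MvPolynomial (Fin 3) k := X 1 * fP + X 0 ^ 2

/-- `g := x3*f^2 + 2*x1*x2*f + x1^3`. -/
def gP : MvPolynomial (Fin 3) k := X 2 * fP ^ 2 + 2 * X 0 * X 1 * fP + X 0 ^ 3

/-- The Jacobian derivation `Δ = Δ_{(f,g)}`, `h ↦ det ∂(f,g,h)/∂(x1,x2,x3)`. -/
def Del (h : MvPolynomial (Fin 3) k) : MvPolynomial (Fin 3) k :=
  Matrix.det !![pderiv 0 fP, pderiv 1 fP, pderiv 2 fP;
                pderiv 0 gP, pderiv 1 gP, pderiv 2 gP;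
                pderiv 0 h,  pderiv 1 h,  pderiv 2 h]

/-- `φ = exp D`: for every `h` and every `N` with `D^[N] h = 0`,
    `φ h = ∑_{i<N} D^i(h)/i!`.  (For a locally nilpotent `D` this characterizes
    the exponential automorphism.) -/
def IsExpOf {σ : Type*} (D : MvPolynomial σ k → MvPolynomial σ k)
    (φ : MvPolynomial σ k ≃ₐ[k] MvPolynomial σ k) : Prop :=
  ∀ (h : MvPolynomial σ k) (N : ℕ), D^[N] h = 0 →
    φ h = ∑ i ∈ Finset.range N, (Nat.factorial i : k)⁻¹ • D^[i] h

/-- `α` is an affine automorphism: `α(x_i) = ∑_j a_{j,i} x_j + b_i` with `A ∈ GL₃(k)`. -/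
def IsAffine (α : MvPolynomial (Fin 3) k ≃ₐ[k] MvPolynomial (Fin 3) k) : Prop :=
  ∃ (A : Matrix (Fin 3) (Fin 3) k) (b : Fin 3 → k), IsUnit A.det ∧
    ∀ i : Fin 3, α (X i) = (∑ j : Fin 3, C (A j i) * X j) + C (b i)

/-- `Aff_3(k)` as a set of automorphisms. -/
def AffSet : Set (MvPolynomial (Fin 3) k ≃ₐ[k] MvPolynomial (Fin 3) k) := {α | IsAffine α}

/-- `α` is a triangular automorphism: `α(x_i) = a_i x_i + f_i(x_1,…,x_{i-1})`, `a_i ≠ 0`. -/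
def IsTriangular (α : MvPolynomial (Fin 3) k ≃ₐ[k] MvPolynomial (Fin 3) k) : Prop :=
  ∃ (a : Fin 3 → k) (p : Fin 3 → MvPolynomial (Fin 3) k),
    (∀ i, a i ≠ 0) ∧ (∀ i, p i ∈ MvPolynomial.supported k {j | j < i}) ∧
    (∀ i, α (X i) = C (a i) * X i + p i)

/-- `BA_3(k)` as a set of automorphisms. -/
def TriSet : Set (MvPolynomial (Fin 3) k ≃ₐ[k] MvPolynomial (Fin 3) k) := {α | IsTriangular α}

/-- The tame subgroup `TA_3(k) = ⟨Aff_3(k), BA_3(k)⟩`. -/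
def TA : Subgroup (MvPolynomial (Fin 3) k ≃ₐ[k] MvPolynomial (Fin 3) k) :=
  Subgroup.closure (AffSet ∪ TriSet)

/-- `β = β_u = (u^3 x1, u^2 x2, u x3)`. -/
def IsBeta (u : k) (β : MvPolynomial (Fin 3) k ≃ₐ[k] MvPolynomial (Fin 3) k) : Prop :=
  β (X 0) = C (u ^ 3) * X 0 ∧ β (X 1) = C (u ^ 2) * X 1 ∧ β (X 2) = C u * X 2

/-- `B = {β_u | u ∈ k^*}`. -/
def BSet : Set (MvPolynomial (Fin 3) k ≃ₐ[k] MvPolynomial (Fin 3) k) :=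
  {β | ∃ u : k, u ≠ 0 ∧ IsBeta u β}

/-! Six-variable ring `k[x1,x2,x3,t_r,t_f,t_g]`:
variables `X 0 = x1, X 1 = x2, X 2 = x3, X 3 = t_r, X 4 = t_f, X 5 = t_g`. -/

/-- The inclusion of variable index sets. -/
def ι36 : Fin 3 → Fin 6 := Fin.castLE (by norm_num)

/-- The embedding `k[x1,x2,x3] → k[x1,x2,x3,t_r,t_f,t_g]`. -/
def embP : MvPolynomial (Fin 3) k →ₐ[k] MvPolynomial (Fin 6) k := rename ι36

/-- The substitution map `π : t_r ↦ r, t_f ↦ f, t_g ↦ g` (fixing `x1,x2,x3`). -/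
def piMap : MvPolynomial (Fin 6) k →ₐ[k] MvPolynomial (Fin 3) k :=
  aeval ![X 0, X 1, X 2, rP, fP, gP]

/-- The triangular derivation
`Δ' = -2 t_r t_f ∂/∂x1 + (4 x1 t_r - t_g) ∂/∂x2 + (6 x2 t_r + 2 t_f²) ∂/∂x3 - t_f t_g ∂/∂t_r`. -/
def Del' (p : MvPolynomial (Fin 6) k) : MvPolynomial (Fin 6) k :=
  (-(2 * X 3 * X 4)) * pderiv 0 p + (4 * X 0 * X 3 - X 5) * pderiv 1 p +
  (6 * X 1 * X 3 + 2 * X 4 ^ 2) * pderiv 2 p + (-(X 4 * X 5)) * pderiv 3 p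

/-- The weight `w1 = (1,2,3,1,0,1)`. -/
def w1 : Fin 6 → ℕ := ![1, 2, 3, 1, 0, 1]

/-- The weight `w2 = (0,0,0,0,1,0)`. -/
def w2 : Fin 6 → ℕ := ![0, 0, 0, 0, 1, 0]

/-- The sixth cyclic lexicographic order on exponent vectors: first compare the
exponent of `t_g`, then lexicographically the exponents of `x1,x2,x3,t_r,t_f`. -/
def cyclicLt (a b : Fin 6 →₀ ℕ) : Prop :=
  a 5 < b 5 ∨ (a 5 = b 5 ∧ ∃ m : Fin 5,
    (∀ l : Fin 5, l < m → a l.castSucc = b l.castSucc) ∧ a m.castSucc < b m.castSucc)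

/-- The leading monomial of `p` (for the sixth cyclic lexicographic order) is `m`. -/
def LeadMonIs (p : MvPolynomial (Fin 6) k) (m : Fin 6 →₀ ℕ) : Prop :=
  m ∈ p.support ∧ ∀ m' ∈ p.support, m' ≠ m → cyclicLt m' m

/-- The exponent vector of the monomial `t_f^δ t_g^γ`. -/
def tfMon (γ δ : ℕ) : Fin 6 →₀ ℕ := Finsupp.single 4 δ + Finsupp.single 5 γ

/-- The set `P_{γ,δ}`. -/
def Pset (γ δ : ℕ) : Set (MvPolynomial (Fin 6) k) :=
  {p | p ≠ 0 ∧ weightedTotalDegree w1 p ≤ γ ∧ weightedTotalDegree w2 p ≤ δ ∧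
    LeadMonIs p (tfMon γ δ)}

/-- `α'` is a lift of `α`. -/
def IsLift (α : MvPolynomial (Fin 3) k ≃ₐ[k] MvPolynomial (Fin 3) k)
    (α' : MvPolynomial (Fin 6) k →ₐ[k] MvPolynomial (Fin 6) k) : Prop :=
  (∀ i : Fin 3, α' (X (ι36 i)) = embP (α (X i))) ∧
  (∀ p, piMap (α' p) = α (piMap p))

/-- `t = γ_j = max {i | a_{i,j} ≠ 0}` (with rows indexed `1,2,3`). -/
def TypeIs (A : Matrix (Fin 3) (Fin 3) k) (j : Fin 3) (t : ℕ) : Prop :=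
  ∃ i : Fin 3, t = (i : ℕ) + 1 ∧ A i j ≠ 0 ∧ ∀ i' : Fin 3, i < i' → A i' j = 0

/-- Condition (C) for a lift `α'` of an affine automorphism of type `(γ1,γ2,γ3)`,
relative to `φ' = exp(uΔ')`. -/
def CondC (γ1 γ2 γ3 : ℕ) (φ' : MvPolynomial (Fin 6) k ≃ₐ[k] MvPolynomial (Fin 6) k)
    (α' : MvPolynomial (Fin 6) k →ₐ[k] MvPolynomial (Fin 6) k) : Prop :=
  ∃ m4 m5 m6 n4 n5 n6 : ℕ,
    1 ≤ n4 ∧ 1 ≤ n5 ∧ 1 ≤ n6 ∧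
    φ' (α' (X 3)) ∈ Pset m4 n4 ∧
    φ' (α' (X 4)) ∈ Pset m5 n5 ∧
    φ' (α' (X 5)) ∈ Pset m6 n6 ∧
    γ1 ≤ m6 ∧ γ2 ≤ 2 * m6 ∧ γ3 ≤ 3 * m6 ∧ m4 ≤ m6 ∧
    γ1 + 1 ≤ n6 - 1 ∧ γ2 + 1 ≤ 2 * (n6 - 1) ∧ γ3 + 1 ≤ 3 * (n6 - 1) ∧ n4 ≤ n6 - 1

/-- The image of `x_j` under the affine map given by `(A, d)`, inside the six-variable ring. -/
def affImg (A : Matrix (Fin 3) (Fin 3) k) (d : Fin 3 → k) (j : Fin 3) :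
    MvPolynomial (Fin 6) k :=
  (∑ i : Fin 3, C (A i j) * X (ι36 i)) + C (d j)

/-- The image of `t_f` under the lift `α̂`:
`α̂(t_f) = α(f) + (a_{1,1}a_{3,3} - 2a_{1,2}a_{3,2} + a_{1,3}a_{3,1})(t_f - f)`. -/
def hatTf (A : Matrix (Fin 3) (Fin 3) k) (d : Fin 3 → k) : MvPolynomial (Fin 6) k :=
  (affImg A d 0 * affImg A d 2 - affImg A d 1 ^ 2) +
    C (A 0 0 * A 2 2 - 2 * (A 0 1 * A 2 1) + A 0 2 * A 2 0) *
      (X 4 - (X 0 * X 2 - X 1 ^ 2))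

/-- The lift `α̂` of the affine automorphism given by `(A, d)`:
`α̂(x_i) = α(x_i)`, `α̂(t_f)` as in `hatTf`, `α̂(t_r) = α̂(x2 t_f + x1²)`,
`α̂(t_g) = α̂(x3 t_f² + 2 x1 x2 t_f + x1³)`. -/
def hatLift (A : Matrix (Fin 3) (Fin 3) k) (d : Fin 3 → k) :
    MvPolynomial (Fin 6) k →ₐ[k] MvPolynomial (Fin 6) k :=
  aeval ![affImg A d 0, affImg A d 1, affImg A d 2,
    affImg A d 1 * hatTf A d + affImg A d 0 ^ 2,
    hatTf A d,
    affImg A d 2 * hatTf A d ^ 2 + 2 * affImg A d 0 * affImg A d 1 * hatTf A d +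
      affImg A d 0 ^ 3]

/-! Since `Δ` is locally nilpotent, it is nilpotent on each `Δ`-stable subspace `ker Δ^N`, where
`φ_u` is the nilpotent exponential of `u Δ`; hence `u ↦ φ_u` is a one-parameter group.
As `f` and `g` are weighted homogeneous of degrees 4 and 9 for the weights `(3, 2, 1)`,
`β_u Δ β_u⁻¹ = u^7 Δ`, so `β_u φ_v β_u⁻¹ = φ_{u^7 v}` and `B ∘ {φ_u}` is a group containing `φ`
and `B`. Finally `φ_u(x1) = x1 + u Δ(x1) + u²/2 Δ²(x1)` contains the monomial `2u x1² x2²`, so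
`φ_u` is not affine for `u ≠ 0`; an affine `β φ_u` in the group therefore has `u = 0`. -/

section LocallyNilpotentExp

open Finset

variable {σ : Type*} (D : Module.End k (MvPolynomial σ k))

lemma iterate_smul_apply (u : k) (n : ℕ) (h : MvPolynomial σ k) :
    (fun h => u • D h)^[n] h = u ^ n • (D ^ n) h := by
  rw [show (fun h => u • D h) = ⇑(u • D) from rfl, ← Module.End.coe_pow, smul_pow,
    LinearMap.smul_apply]

variable {D}

lemma IsExpOf.apply_eq_sum {u : k} {φ : MvPolynomial σ k ≃ₐ[k] MvPolynomial σ k}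
    (hφ : IsExpOf (fun h => u • D h) φ) {h : MvPolynomial σ k} {N : ℕ} (hN : (D ^ N) h = 0) :
    φ h = ∑ i ∈ range N, (u ^ i * (i.factorial : k)⁻¹) • (D ^ i) h := by
  rw [hφ h N (by rw [iterate_smul_apply, hN, smul_zero])]
  refine sum_congr rfl fun i _ => ?_
  rw [iterate_smul_apply, smul_smul, mul_comm]

lemma ker_pow_mapsTo (D : Module.End k (MvPolynomial σ k)) (N : ℕ) :
    ∀ x ∈ LinearMap.ker (D ^ N), D x ∈ LinearMap.ker (D ^ N) := fun x hx => by
  rw [LinearMap.mem_ker, ← Module.End.mul_apply, ← pow_succ, pow_succ',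
    Module.End.mul_apply, LinearMap.mem_ker.1 hx, map_zero]

lemma IsExpOf.apply_eq_exp_restrict [CharZero k] {u : k}
    {φ : MvPolynomial σ k ≃ₐ[k] MvPolynomial σ k} (hφ : IsExpOf (fun h => u • D h) φ) {N : ℕ}
    (x : LinearMap.ker (D ^ N)) :
    φ x = ↑(IsNilpotent.exp (u • D.restrict (ker_pow_mapsTo D N)) x) := by
  have hnil : (u • D.restrict (ker_pow_mapsTo D N)) ^ N = 0 := by
    ext y
    simp [smul_pow, Module.End.pow_restrict N, LinearMap.restrict_apply]
  rw [hφ.apply_eq_sum (LinearMap.mem_ker.1 x.2), ← Module.End.smul_def,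
    IsNilpotent.exp_smul_eq_sum (k := N) (by rw [hnil, zero_smul]) ⟨N, hnil⟩]
  push_cast
  refine sum_congr rfl fun i _ => ?_
  simp only [mul_smul, smul_pow, Module.End.pow_restrict i, smul_assoc, Module.End.smul_def,
    LinearMap.restrict_apply, SetLike.mk_smul_mk, ← Rat.cast_smul_eq_qsmul k, Rat.cast_inv,
    Rat.cast_natCast]
  exact smul_comm _ _ _

section ExpAdd

variable [CharZero k] (hD : ∀ h, ∃ N, (D ^ N) h = 0)
  {φ : k → (MvPolynomial σ k ≃ₐ[k] MvPolynomial σ k)} (hφ : ∀ u, IsExpOf (fun h => u • D h) (φ u))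
include hD hφ

lemma IsExpOf.map_zero_eq_one : φ 0 = 1 := by
  refine AlgEquiv.ext fun h => ?_
  obtain ⟨N, hN⟩ := hD h
  rw [(hφ 0).apply_eq_exp_restrict ⟨h, hN⟩, zero_smul, IsNilpotent.exp_zero]
  rfl

lemma IsExpOf.map_add_eq_mul (a b : k) : φ (a + b) = φ a * φ b := by
  refine AlgEquiv.ext fun h => ?_
  obtain ⟨N, hN⟩ := hD h
  set D' := D.restrict (ker_pow_mapsTo D N)
  have hnil : IsNilpotent D' := ⟨N, by ext y; simp [D', Module.End.pow_restrict N]⟩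
  have hcomm : Commute (a • D') (b • D') := ((Commute.refl D').smul_left a).smul_right b
  have key := fun u => (hφ u).apply_eq_exp_restrict (N := N)
  rw [AlgEquiv.mul_apply, show h = ((⟨h, hN⟩ : LinearMap.ker (D ^ N)) : MvPolynomial σ k) from rfl,
    key, key, key, add_smul, IsNilpotent.exp_add_of_commute hcomm (hnil.smul a) (hnil.smul b)]
  rfl

end ExpAdd

end LocallyNilpotentExp

section Conjugation

open Finset

variable {σ : Type*} {D : Module.End k (MvPolynomial σ k)}
  {β : MvPolynomial σ k ≃ₐ[k] MvPolynomial σ k} {c : k}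

lemma map_pow_apply_of_map_apply (hβ : ∀ h, β (D h) = c • D (β h)) (n : ℕ)
    (h : MvPolynomial σ k) : β ((D ^ n) h) = c ^ n • (D ^ n) (β h) := by
  induction n generalizing h with
  | zero => simp
  | succ n ih => rw [pow_succ, Module.End.mul_apply, ih, hβ, map_smul, smul_smul, ← pow_succ,
      ← Module.End.mul_apply, ← pow_succ]

lemma IsExpOf.mul_eq_mul_of_map_apply (hβ : ∀ h, β (D h) = c • D (β h)) (hc : c ≠ 0)
    (hD : ∀ h, ∃ N, (D ^ N) h = 0) {v : k} {φ ψ : MvPolynomial σ k ≃ₐ[k] MvPolynomial σ k}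
    (hφ : IsExpOf (fun h => v • D h) φ) (hψ : IsExpOf (fun h => (v * c) • D h) ψ) :
    β * φ = ψ * β := by
  refine AlgEquiv.ext fun h => ?_
  obtain ⟨N, hN⟩ := hD h
  have hNβ : (D ^ N) (β h) = 0 := by
    simpa [hN, hc] using (map_pow_apply_of_map_apply hβ N h).symm
  rw [AlgEquiv.mul_apply, AlgEquiv.mul_apply, hφ.apply_eq_sum hN, hψ.apply_eq_sum hNβ, map_sum]
  refine sum_congr rfl fun i _ => ?_
  rw [map_smul, map_pow_apply_of_map_apply hβ, smul_smul, mul_pow]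
  congr 1
  ring

end Conjugation

lemma Derivation.map_ofNat {R A M : Type*} [CommSemiring R] [CommSemiring A] [Algebra R A]
    [AddCommMonoid M] [Module A M] [Module R M] [IsScalarTower R A M]
    (D : Derivation R A M) (n : ℕ) [n.AtLeastTwo] : D (no_index (OfNat.ofNat n) : A) = 0 :=
  D.map_natCast n

lemma pderiv_map_of_map_X {σ F : Type*} [DecidableEq σ] [FunLike F (MvPolynomial σ k)
    (MvPolynomial σ k)] [AlgHomClass F k (MvPolynomial σ k) (MvPolynomial σ k)] {β : F}
    {c : σ → k} (hβ : ∀ j, β (X j) = C (c j) * X j) (i : σ) (h : MvPolynomial σ k) :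
    pderiv i (β h) = c i • β (pderiv i h) := by
  induction h using MvPolynomial.induction_on with
  | C a => rw [← algebraMap_eq, AlgHomClass.commutes]; simp
  | add p q hp hq => rw [map_add, map_add, hp, hq, map_add, map_add, smul_add]
  | mul_X p j ih =>
    rcases eq_or_ne i j with rfl | hij
    · simp only [map_mul, hβ, Derivation.leibniz, pderiv_X_self, smul_eq_mul, mul_one,
        derivation_C, mul_zero, add_zero, ih, smul_eq_C_mul, map_add]
      ring
    · simp only [map_mul, hβ, Derivation.leibniz, pderiv_X_of_ne hij.symm, smul_eq_mul,
        mul_zero, derivation_C, add_zero, ih, smul_eq_C_mul, zero_add]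
      ring

/-- The coefficients of `Del'` with `t_r, t_f, t_g` specialised to `r, f, g`. -/
def delField : Fin 3 → MvPolynomial (Fin 3) k :=
  ![-(2 * fP * rP), 4 * X 0 * rP - gP, 6 * X 1 * rP + 2 * fP ^ 2]

def delDerivation : Derivation k (MvPolynomial (Fin 3) k) (MvPolynomial (Fin 3) k) :=
  (delField 0 : MvPolynomial (Fin 3) k) • pderiv 0 +
    (delField 1 : MvPolynomial (Fin 3) k) • pderiv 1 +
    (delField 2 : MvPolynomial (Fin 3) k) • pderiv 2

abbrev delLinear : Module.End k (MvPolynomial (Fin 3) k) := delDerivation (k := k)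

lemma delDerivation_X (i : Fin 3) : delDerivation (X i : MvPolynomial (Fin 3) k) = delField i := by
  fin_cases i <;> simp [delDerivation]

lemma coe_delDerivation : ⇑(delDerivation (k := k)) = Del := by
  funext h
  simp only [delDerivation, delField, fP, Fin.isValue, rP, gP, Matrix.cons_val_zero,
    Matrix.cons_val_one, Matrix.cons_val, Derivation.coe_add, Derivation.coe_smul, neg_smul,
    Pi.add_apply, Pi.neg_apply, Pi.smul_apply, smul_eq_mul, Del, map_sub, Derivation.leibniz,
    pderiv_X, ne_eq, Fin.reduceEq, not_false_eq_true, Pi.single_eq_of_ne, mul_zero,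
    Pi.single_eq_same, mul_one, zero_add, Derivation.leibniz_pow, Nat.add_one_sub_one, pow_one,
    one_ne_zero, sub_zero, zero_ne_one, add_zero, nsmul_eq_mul, Nat.cast_ofNat,
    zero_sub, map_add, Derivation.map_ofNat, mul_neg, smul_neg, Matrix.det_fin_three,
    Matrix.of_apply, Matrix.cons_val', Matrix.cons_val_fin_one, neg_mul, sub_neg_eq_add]
  ring

lemma delDerivation_fP : delDerivation (fP : MvPolynomial (Fin 3) k) = 0 := by
  rw [coe_delDerivation]
  exact Matrix.det_zero_of_row_eq (i := 0) (j := 2) (by decide) rfl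

lemma delDerivation_gP : delDerivation (gP : MvPolynomial (Fin 3) k) = 0 := by
  rw [coe_delDerivation]
  exact Matrix.det_zero_of_row_eq (i := 1) (j := 2) (by decide) rfl

lemma delDerivation_rP : delDerivation (rP : MvPolynomial (Fin 3) k) = -(fP * gP) := by
  simp only [rP, Fin.isValue, map_add, Derivation.leibniz, delDerivation_fP, smul_eq_mul, mul_zero,
    delDerivation_X, delField, Matrix.cons_val_one, Matrix.cons_val_zero, zero_add,
    Derivation.leibniz_pow, Nat.add_one_sub_one, pow_one, mul_neg, smul_neg, nsmul_eq_mul,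
    Nat.cast_ofNat]
  ring

lemma delLinear_sq_X0 :
    (delLinear ^ 2) (X 0) = (2 * fP ^ 2 * gP : MvPolynomial (Fin 3) k) := by
  simp only [sq, Fin.isValue, Module.End.mul_apply, Derivation.coeFn_coe, delDerivation_X, delField,
    Matrix.cons_val_zero, map_neg, Derivation.leibniz, delDerivation_rP, smul_eq_mul, mul_neg,
    delDerivation_fP, mul_zero, Derivation.map_ofNat, add_zero, neg_neg]
  ring

lemma delLinear_pow_three_X0 :
    (delLinear ^ 3) (X 0 : MvPolynomial (Fin 3) k) = 0 := by
  rw [pow_succ', Module.End.mul_apply, delLinear_sq_X0]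
  simp [delDerivation_fP, delDerivation_gP, Derivation.map_ofNat]

lemma isExpOf_Del_iff {u : k} {φ : MvPolynomial (Fin 3) k ≃ₐ[k] MvPolynomial (Fin 3) k} :
    IsExpOf (fun h => u • Del h) φ ↔ IsExpOf (fun h => u • delLinear h) φ := by
  rw [← coe_delDerivation]
  rfl

lemma delLinear_pow_apply (n : ℕ) (h : MvPolynomial (Fin 3) k) :
    (delLinear ^ n) h = Del^[n] h := by
  rw [Module.End.coe_pow, ← coe_delDerivation]
  rfl

section Beta

variable {u v : k} {β γ : MvPolynomial (Fin 3) k ≃ₐ[k] MvPolynomial (Fin 3) k}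

lemma IsBeta.map_X (hβ : IsBeta u β) : ∀ j, β (X j) = C (![u ^ 3, u ^ 2, u] j) * X j := by
  obtain ⟨h0, h1, h2⟩ := hβ
  intro j
  fin_cases j <;> simp [h0, h1, h2]

lemma isBeta_iff : IsBeta u β ↔ ∀ j, β (X j) = C (![u ^ 3, u ^ 2, u] j) * X j :=
  ⟨IsBeta.map_X, fun h => ⟨by simpa using h 0, by simpa using h 1, by simpa using h 2⟩⟩

lemma IsBeta.map_fP (hβ : IsBeta u β) : β fP = C (u ^ 4) * fP := by
  simp only [fP, Fin.isValue, map_sub, map_mul, hβ.1, hβ.2.2, map_pow, hβ.2.1]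
  ring

lemma IsBeta.map_rP (hβ : IsBeta u β) : β rP = C (u ^ 6) * rP := by
  simp only [rP, Fin.isValue, map_add, map_mul, hβ.2.1, hβ.map_fP, map_pow, hβ.1]
  ring

lemma IsBeta.map_gP (hβ : IsBeta u β) : β gP = C (u ^ 9) * gP := by
  simp only [gP, Fin.isValue, map_add, map_mul, hβ.2.2, map_pow, hβ.map_fP, map_ofNat, hβ.1,
    hβ.2.1]
  ring

lemma IsBeta.map_delDerivation (hβ : IsBeta u β) (h : MvPolynomial (Fin 3) k) :
    β (delDerivation h) = u ^ 7 • delDerivation (β h) := by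
  simp only [delDerivation, delField, Fin.isValue, Matrix.cons_val_zero, Matrix.cons_val_one,
    Matrix.cons_val, Derivation.coe_add, Derivation.coe_smul, neg_smul, Pi.add_apply, Pi.neg_apply,
    Pi.smul_apply, smul_eq_mul, map_add, map_neg, map_mul, map_ofNat, hβ.map_fP, hβ.map_rP,
    map_sub, hβ.1, hβ.map_gP, hβ.2.1, map_pow, pderiv_map_of_map_X hβ.map_X, Nat.succ_eq_add_one,
    Nat.reduceAdd, smul_eq_C_mul, smul_add, smul_neg]
  ring

lemma isBeta_one : IsBeta (1 : k) 1 := by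
  simp [IsBeta]

lemma IsBeta.mul (hβ : IsBeta u β) (hγ : IsBeta v γ) : IsBeta (u * v) (β * γ) := by
  rw [isBeta_iff] at *
  intro j
  rw [AlgEquiv.mul_apply, hγ, map_mul, ← algebraMap_eq, AlgHomClass.commutes, hβ, algebraMap_eq,
    ← mul_assoc, ← C_mul]
  fin_cases j <;> simp [mul_pow, mul_comm]

lemma IsBeta.inv (hβ : IsBeta u β) (hu : u ≠ 0) : IsBeta u⁻¹ β⁻¹ := by
  rw [isBeta_iff] at *
  intro j
  apply β.injective
  rw [← AlgEquiv.mul_apply, mul_inv_cancel, AlgEquiv.one_apply, map_mul, ← algebraMap_eq,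
    AlgHomClass.commutes, hβ, algebraMap_eq, ← mul_assoc, ← C_mul]
  fin_cases j <;> simp [hu]

lemma IsBeta.isAffine (hβ : IsBeta u β) (hu : u ≠ 0) : IsAffine β := by
  refine ⟨Matrix.diagonal ![u ^ 3, u ^ 2, u], 0, ?_, fun i => ?_⟩
  · simp [Matrix.det_diagonal, Fin.prod_univ_three, hu]
  · fin_cases i <;> simp [Fin.sum_univ_three, hβ.1, hβ.2.1, hβ.2.2]

end Beta

lemma IsAffine.mul {α β : MvPolynomial (Fin 3) k ≃ₐ[k] MvPolynomial (Fin 3) k}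
    (hα : IsAffine α) (hβ : IsAffine β) : IsAffine (α * β) := by
  obtain ⟨A, a, hA, hα⟩ := hα
  obtain ⟨B, b, hB, hβ⟩ := hβ
  refine ⟨A * B, Matrix.vecMul a B + b, by simpa [Matrix.det_mul] using hA.mul hB, fun i => ?_⟩
  simp only [AlgEquiv.mul_apply, hβ, map_add, map_sum, map_mul, ← algebraMap_eq,
    AlgHomClass.commutes, hα]
  simp only [algebraMap_eq, Fin.sum_univ_three, Matrix.mul_apply, Matrix.vecMul, dotProduct,
    Pi.add_apply, map_add, map_mul]
  ring

lemma IsAffine.pderiv_pderiv_map_X {α : MvPolynomial (Fin 3) k ≃ₐ[k] MvPolynomial (Fin 3) k}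
    (hα : IsAffine α) (i j l : Fin 3) : pderiv i (pderiv j (α (X l))) = 0 := by
  obtain ⟨A, a, -, hα⟩ := hα
  fin_cases j <;> simp [hα, Fin.sum_univ_three]

lemma IsExpOf.map_X0 [CharZero k] {u : k} {φ : MvPolynomial (Fin 3) k ≃ₐ[k] MvPolynomial (Fin 3) k}
    (hφ : IsExpOf (fun h => u • delLinear h) φ) :
    φ (X 0) = X 0 - C u * (2 * fP * rP) + C (u ^ 2) * (fP ^ 2 * gP) := by
  rw [hφ.apply_eq_sum delLinear_pow_three_X0]
  have h2 : (C (2⁻¹ : k) : MvPolynomial (Fin 3) k) * 2 = 1 := by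
    rw [← map_ofNat C 2, ← C_mul, inv_mul_cancel₀ two_ne_zero, C_1]
  simp only [Fin.isValue, smul_eq_C_mul, C_mul, C_pow, Finset.sum_range_succ, Finset.range_one,
    Finset.sum_singleton, pow_zero, Nat.factorial_zero, Nat.cast_one, inv_one, C_1, mul_one,
    Module.End.one_apply, one_mul, pow_one, Nat.factorial_one, Derivation.coeFn_coe,
    delDerivation_X, delField, Matrix.cons_val_zero, mul_neg, Nat.factorial_two, Nat.cast_ofNat,
    delLinear_sq_X0]
  linear_combination (C u ^ 2 * fP ^ 2 * gP) * h2

lemma IsExpOf.not_isAffine [CharZero k] {u : k} (hu : u ≠ 0)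
    {φ : MvPolynomial (Fin 3) k ≃ₐ[k] MvPolynomial (Fin 3) k}
    (hφ : IsExpOf (fun h => u • delLinear h) φ) : ¬ IsAffine φ := by
  intro hα
  have h := congrArg (eval ![1, 0, 0]) (hα.pderiv_pderiv_map_X 1 1 0)
  rw [hφ.map_X0] at h
  exact hu (by simpa [fP, rP, gP, Derivation.map_ofNat] using h)

section ExpFamily

variable [CharZero k] {Φ : k → (MvPolynomial (Fin 3) k ≃ₐ[k] MvPolynomial (Fin 3) k)}
  (hD : ∀ h : MvPolynomial (Fin 3) k, ∃ N, (delLinear ^ N) h = 0)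
  (hΦ : ∀ u : k, IsExpOf (fun h => u • delLinear h) (Φ u))
include hD hΦ

lemma Phi_inv (v : k) : (Φ v)⁻¹ = Φ (-v) := by
  rw [inv_eq_iff_mul_eq_one, ← IsExpOf.map_add_eq_mul hD hΦ, add_neg_cancel,
    IsExpOf.map_zero_eq_one hD hΦ]

omit [CharZero k] in
lemma Phi_mul_beta {u : k} (hu : u ≠ 0) {β : MvPolynomial (Fin 3) k ≃ₐ[k] MvPolynomial (Fin 3) k}
    (hβ : IsBeta u β) (v : k) : Φ v * β = β * Φ (v / u ^ 7) := by
  refine (IsExpOf.mul_eq_mul_of_map_apply hβ.map_delDerivation (pow_ne_zero 7 hu) hD (hΦ _)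
    ?_).symm
  rw [div_mul_cancel₀ v (pow_ne_zero 7 hu)]
  exact hΦ v

lemma closure_subset_beta_mul_Phi :
    ∀ θ ∈ Subgroup.closure ({Φ 1} ∪ BSet), ∃ β ∈ BSet, ∃ u : k, θ = β * Φ u := by
  have hΦ0 := IsExpOf.map_zero_eq_one hD hΦ
  intro θ hθ
  induction hθ using Subgroup.closure_induction with
  | mem θ hθ =>
    rcases hθ with rfl | hβ
    · exact ⟨1, ⟨1, one_ne_zero, isBeta_one⟩, 1, (one_mul _).symm⟩
    · exact ⟨θ, hβ, 0, by rw [hΦ0, mul_one]⟩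
  | one => exact ⟨1, ⟨1, one_ne_zero, isBeta_one⟩, 0, by rw [hΦ0, mul_one]⟩
  | mul _ _ _ _ ih ih' =>
    obtain ⟨β, ⟨u, hu, hβ⟩, v, rfl⟩ := ih
    obtain ⟨γ, ⟨w, hw, hγ⟩, x, rfl⟩ := ih'
    refine ⟨β * γ, ⟨u * w, mul_ne_zero hu hw, hβ.mul hγ⟩, v / w ^ 7 + x, ?_⟩
    rw [IsExpOf.map_add_eq_mul hD hΦ, mul_assoc, ← mul_assoc (Φ v), Phi_mul_beta hD hΦ hw hγ]
    simp only [mul_assoc]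
  | inv _ _ ih =>
    obtain ⟨β, ⟨u, hu, hβ⟩, v, rfl⟩ := ih
    refine ⟨β⁻¹, ⟨u⁻¹, inv_ne_zero hu, hβ.inv hu⟩, -v / u⁻¹ ^ 7, ?_⟩
    rw [mul_inv_rev, Phi_inv hD hΦ, Phi_mul_beta hD hΦ (inv_ne_zero hu) (hβ.inv hu)]

end ExpFamily

/-- `⟨φ, B⟩ ⊆ B ∘ {φ_u | u ∈ k}` (with `φ_0 = id`),
`⟨φ, B⟩ ∩ Aff_3(k) = B`, and `φ_u ∉ Aff_3(k)` for every `u ∈ k^*`. -/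
theorem statement4 [CharZero k]
    (hln : ∀ h : MvPolynomial (Fin 3) k, ∃ l : ℕ, Del^[l] h = 0)
    (Φ : k → (MvPolynomial (Fin 3) k ≃ₐ[k] MvPolynomial (Fin 3) k))
    (hΦ : ∀ u : k, IsExpOf (fun h => u • Del h) (Φ u)) :
    (∀ θ ∈ Subgroup.closure ({Φ 1} ∪ BSet), ∃ β ∈ BSet, ∃ u : k, θ = β * Φ u) ∧
    ({θ | θ ∈ Subgroup.closure ({Φ 1} ∪ BSet) ∧ IsAffine θ} = BSet) ∧
    (∀ u : k, u ≠ 0 → ¬ IsAffine (Φ u)) := by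
  have hD : ∀ h, ∃ N, (delLinear ^ N) h = 0 := fun h =>
    (hln h).imp fun N hN => by rw [delLinear_pow_apply, hN]
  have hΦ' : ∀ u : k, IsExpOf (fun h => u • delLinear h) (Φ u) := fun u => isExpOf_Del_iff.1 (hΦ u)
  have hnotAff : ∀ u : k, u ≠ 0 → ¬ IsAffine (Φ u) := fun u hu => (hΦ' u).not_isAffine hu
  refine ⟨closure_subset_beta_mul_Phi hD hΦ', Set.ext fun θ => ⟨?_, ?_⟩, hnotAff⟩
  · rintro ⟨hθ, hθAff⟩
    obtain ⟨β, ⟨u, hu, hβ⟩, v, rfl⟩ := closure_subset_beta_mul_Phi hD hΦ' θ hθ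
    obtain rfl : v = 0 := by
      by_contra hv
      refine hnotAff v hv ?_
      simpa using ((hβ.inv hu).isAffine (inv_ne_zero hu)).mul hθAff
    rw [IsExpOf.map_zero_eq_one hD hΦ', mul_one]
    exact ⟨u, hu, hβ⟩
  · rintro ⟨u, hu, hβ⟩
    exact ⟨Subgroup.subset_closure (Or.inr ⟨u, hu, hβ⟩), hβ.isAffine hu⟩

end YasudaPaper
end
end

section
/- The Jacobian derivation Δ = Δ_{(f,g)} satisfies Δ(f) = 0, Δ(g) = 0, Δ(x1) = -2*r*f, Δ(x2) = 4*x1*r - g, Δ(x3) = 6*x2*r + 2*f^2, and Δ(r) = -f*g. -/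
open MvPolynomial

noncomputable section

namespace YasudaPaper

variable {k : Type*} [Field k]

lemma pd_two (i : Fin 3) : pderiv i (2 : MvPolynomial (Fin 3) k) = 0 := by
  rw [← map_ofNat (C : k →+* MvPolynomial (Fin 3) k) 2, pderiv_C]

lemma pdX01 : pderiv (0 : Fin 3) (X 1 : MvPolynomial (Fin 3) k) = 0 :=
  pderiv_X_of_ne (by decide)
lemma pdX02 : pderiv (0 : Fin 3) (X 2 : MvPolynomial (Fin 3) k) = 0 :=
  pderiv_X_of_ne (by decide)
lemma pdX10 : pderiv (1 : Fin 3) (X 0 : MvPolynomial (Fin 3) k) = 0 :=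
  pderiv_X_of_ne (by decide)
lemma pdX12 : pderiv (1 : Fin 3) (X 2 : MvPolynomial (Fin 3) k) = 0 :=
  pderiv_X_of_ne (by decide)
lemma pdX20 : pderiv (2 : Fin 3) (X 0 : MvPolynomial (Fin 3) k) = 0 :=
  pderiv_X_of_ne (by decide)
lemma pdX21 : pderiv (2 : Fin 3) (X 1 : MvPolynomial (Fin 3) k) = 0 :=
  pderiv_X_of_ne (by decide)

lemma pdf0 : pderiv (0 : Fin 3) (fP : MvPolynomial (Fin 3) k) = X 2 := by
  simp [fP, pderiv_mul, pderiv_pow, pdX01, pdX02, pderiv_X_self]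
lemma pdf1 : pderiv (1 : Fin 3) (fP : MvPolynomial (Fin 3) k) = -(2 * X 1) := by
  simp [fP, pderiv_mul, pderiv_pow, pdX10, pdX12, pderiv_X_self]
lemma pdf2 : pderiv (2 : Fin 3) (fP : MvPolynomial (Fin 3) k) = X 0 := by
  simp [fP, pderiv_mul, pderiv_pow, pdX20, pdX21, pderiv_X_self]

lemma pdg0 : pderiv (0 : Fin 3) (gP : MvPolynomial (Fin 3) k)
    = 2 * X 2 ^ 2 * fP + 2 * X 1 * fP + 2 * X 0 * X 1 * X 2 + 3 * X 0 ^ 2 := by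
  simp only [gP, map_add, pderiv_mul, pderiv_pow, pd_two, pdX01, pdX02, pderiv_X_self,
    pdf0, mul_zero, zero_mul, add_zero, zero_add, mul_one, one_mul]
  ring
lemma pdg1 : pderiv (1 : Fin 3) (gP : MvPolynomial (Fin 3) k)
    = -(4 * X 1 * X 2 * fP) + 2 * X 0 * fP - 4 * X 0 * X 1 ^ 2 := by
  simp only [gP, map_add, pderiv_mul, pderiv_pow, pd_two, pdX10, pdX12, pderiv_X_self,
    pdf1, mul_zero, zero_mul, add_zero, zero_add, mul_one, one_mul]
  ring
lemma pdg2 : pderiv (2 : Fin 3) (gP : MvPolynomial (Fin 3) k)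
    = fP ^ 2 + 2 * X 0 * X 2 * fP + 2 * X 0 ^ 2 * X 1 := by
  simp only [gP, map_add, pderiv_mul, pderiv_pow, pd_two, pdX20, pdX21, pderiv_X_self,
    pdf2, mul_zero, zero_mul, add_zero, zero_add, mul_one, one_mul]
  ring

lemma pdr0 : pderiv (0 : Fin 3) (rP : MvPolynomial (Fin 3) k) = X 1 * X 2 + 2 * X 0 := by
  simp only [rP, map_add, pderiv_mul, pderiv_pow, pdX01, pderiv_X_self, pdf0,
    mul_zero, zero_mul, add_zero, zero_add, mul_one, one_mul]
  ring
lemma pdr1 : pderiv (1 : Fin 3) (rP : MvPolynomial (Fin 3) k) = fP - 2 * X 1 ^ 2 := by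
  simp only [rP, map_add, pderiv_mul, pderiv_pow, pdX10, pderiv_X_self, pdf1,
    mul_zero, zero_mul, add_zero, zero_add, mul_one, one_mul]
  ring
lemma pdr2 : pderiv (2 : Fin 3) (rP : MvPolynomial (Fin 3) k) = X 0 * X 1 := by
  simp only [rP, map_add, pderiv_mul, pderiv_pow, pdX20, pdX21, pderiv_X_self, pdf2,
    mul_zero, zero_mul, add_zero, zero_add, mul_one, one_mul]
  ring

set_option maxHeartbeats 4000000

/-- The Jacobian derivation `Δ = Δ_{(f,g)}` satisfies
`Δ(f) = 0`, `Δ(g) = 0`, `Δ(x1) = -2rf`, `Δ(x2) = 4 x1 r - g`,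
`Δ(x3) = 6 x2 r + 2 f²`, and `Δ(r) = -fg`. -/
theorem statement6 [CharZero k] :
    Del (fP : MvPolynomial (Fin 3) k) = 0 ∧
    Del (gP : MvPolynomial (Fin 3) k) = 0 ∧
    Del (X 0 : MvPolynomial (Fin 3) k) = -(2 * rP * fP) ∧
    Del (X 1 : MvPolynomial (Fin 3) k) = 4 * X 0 * rP - gP ∧
    Del (X 2 : MvPolynomial (Fin 3) k) = 6 * X 1 * rP + 2 * fP ^ 2 ∧
    Del (rP : MvPolynomial (Fin 3) k) = -(fP * gP) := by
  refine ⟨?_, ?_, ?_, ?_, ?_, ?_⟩ <;>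
  · simp only [Del, Matrix.det_fin_three, Matrix.of_apply, Matrix.cons_val', Matrix.cons_val_zero,
      Matrix.cons_val_one, Matrix.head_cons, Matrix.empty_val', Matrix.cons_val_fin_one,
      Matrix.head_fin_const, Matrix.cons_val_two, Matrix.tail_cons,
      pdf0, pdf1, pdf2, pdg0, pdg1, pdg2, pdr0, pdr1, pdr2,
      pdX01, pdX02, pdX10, pdX12, pdX20, pdX21, pderiv_X_self]
    simp only [fP, gP, rP]
    ring

end YasudaPaper
end
end

section
/- For every u ∈ k^*, one has π ∘ (uΔ') = (uΔ) ∘ π, and consequently π ∘ φ'_u = φ_u ∘ π. -/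
open MvPolynomial

noncomputable section

namespace YasudaPaper

variable {k : Type*} [Field k]

section Aux

lemma pderiv_two {σ : Type*} (i : σ) : pderiv i (2 : MvPolynomial σ k) = 0 := by
  rw [show (2 : MvPolynomial σ k) = C 2 from (map_ofNat C 2).symm]; exact pderiv_C

lemma Del_eq (h : MvPolynomial (Fin 3) k) : Del h =
    (pderiv 1 fP * pderiv 2 gP - pderiv 2 fP * pderiv 1 gP) * pderiv 0 h
  + (pderiv 2 fP * pderiv 0 gP - pderiv 0 fP * pderiv 2 gP) * pderiv 1 h
  + (pderiv 0 fP * pderiv 1 gP - pderiv 1 fP * pderiv 0 gP) * pderiv 2 h := by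
  simp only [Del, Matrix.det_fin_three]
  simp [Matrix.cons_val_zero, Matrix.cons_val_one]
  ring

lemma Del_C (a : k) : Del (C a : MvPolynomial (Fin 3) k) = 0 := by
  simp [Del_eq]

lemma Del_add (p q : MvPolynomial (Fin 3) k) : Del (p + q) = Del p + Del q := by
  simp only [Del_eq, map_add]; ring

lemma Del_mul (p q : MvPolynomial (Fin 3) k) : Del (p * q) = p * Del q + q * Del p := by
  simp only [Del_eq, pderiv_mul]; ring

lemma Del_smul (a : k) (p : MvPolynomial (Fin 3) k) : Del (a • p) = a • Del p := by
  rw [smul_eq_C_mul, smul_eq_C_mul, Del_mul, Del_C]; ring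

lemma Del'_C (a : k) : Del' (C a : MvPolynomial (Fin 6) k) = 0 := by
  simp [Del']

lemma Del'_add (p q : MvPolynomial (Fin 6) k) : Del' (p + q) = Del' p + Del' q := by
  simp only [Del', map_add]; ring

lemma Del'_mul (p q : MvPolynomial (Fin 6) k) : Del' (p * q) = p * Del' q + q * Del' p := by
  simp only [Del', pderiv_mul]; ring

lemma Del'_smul (a : k) (p : MvPolynomial (Fin 6) k) : Del' (a • p) = a • Del' p := by
  rw [smul_eq_C_mul, smul_eq_C_mul, Del'_mul, Del'_C]; ring

lemma Del_X0 : Del (X 0 : MvPolynomial (Fin 3) k) = -(2 * rP * fP) := by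
  simp [Del_eq, gP, rP, fP, pderiv_mul, pderiv_two]; ring

lemma Del_X1 : Del (X 1 : MvPolynomial (Fin 3) k) = 4 * X 0 * rP - gP := by
  simp [Del_eq, gP, rP, fP, pderiv_mul, pderiv_two]; ring

lemma Del_X2 : Del (X 2 : MvPolynomial (Fin 3) k) = 6 * X 1 * rP + 2 * fP ^ 2 := by
  simp [Del_eq, gP, rP, fP, pderiv_mul, pderiv_two]; ring

lemma Del_r : Del (rP : MvPolynomial (Fin 3) k) = -(fP * gP) := by
  simp [Del_eq, gP, rP, fP, pderiv_mul, pderiv_two]; ring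

lemma Del_f : Del (fP : MvPolynomial (Fin 3) k) = 0 := by
  simp [Del_eq, gP, rP, fP, pderiv_mul, pderiv_two]; ring

lemma Del_g : Del (gP : MvPolynomial (Fin 3) k) = 0 := by
  simp [Del_eq, gP, rP, fP, pderiv_mul, pderiv_two]; ring

lemma pi_X0 : (piMap (X 0) : MvPolynomial (Fin 3) k) = X 0 := by simp [piMap]
lemma pi_X1 : (piMap (X 1) : MvPolynomial (Fin 3) k) = X 1 := by simp [piMap]
lemma pi_X2 : (piMap (X 2) : MvPolynomial (Fin 3) k) = X 2 := by simp [piMap]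
lemma pi_X3 : (piMap (X 3) : MvPolynomial (Fin 3) k) = rP := by simp [piMap]
lemma pi_X4 : (piMap (X 4) : MvPolynomial (Fin 3) k) = fP := by simp [piMap]
lemma pi_X5 : (piMap (X 5) : MvPolynomial (Fin 3) k) = gP := by
  rw [piMap, aeval_X]; rfl

lemma Del'_X0 : (Del' (X 0) : MvPolynomial (Fin 6) k) = -(2 * X 3 * X 4) := by
  simp [Del', pderiv_X_self, pderiv_X_of_ne]
lemma Del'_X1 : (Del' (X 1) : MvPolynomial (Fin 6) k) = 4 * X 0 * X 3 - X 5 := by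
  simp [Del', pderiv_X_self, pderiv_X_of_ne]
lemma Del'_X2 : (Del' (X 2) : MvPolynomial (Fin 6) k) = 6 * X 1 * X 3 + 2 * X 4 ^ 2 := by
  simp [Del', pderiv_X_self, pderiv_X_of_ne]
lemma Del'_X3 : (Del' (X 3) : MvPolynomial (Fin 6) k) = -(X 4 * X 5) := by
  simp [Del', pderiv_X_self, pderiv_X_of_ne]
lemma Del'_X4 : (Del' (X 4) : MvPolynomial (Fin 6) k) = 0 := by
  simp [Del', pderiv_X_self, pderiv_X_of_ne]
lemma Del'_X5 : (Del' (X 5) : MvPolynomial (Fin 6) k) = 0 := by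
  simp [Del', pderiv_X_self, pderiv_X_of_ne]

lemma key_gen (j : Fin 6) :
    (piMap (Del' (X j)) : MvPolynomial (Fin 3) k) = Del (piMap (X j)) := by
  fin_cases j
  · show (piMap (Del' (X 0)) : MvPolynomial (Fin 3) k) = Del (piMap (X 0))
    rw [Del'_X0, pi_X0, Del_X0, map_neg, map_mul, map_mul, map_ofNat, pi_X3, pi_X4]
  · show (piMap (Del' (X 1)) : MvPolynomial (Fin 3) k) = Del (piMap (X 1))
    rw [Del'_X1, pi_X1, Del_X1, map_sub, map_mul, map_mul, map_ofNat, pi_X0, pi_X3, pi_X5]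
  · show (piMap (Del' (X 2)) : MvPolynomial (Fin 3) k) = Del (piMap (X 2))
    rw [Del'_X2, pi_X2, Del_X2, map_add, map_mul, map_mul, map_ofNat, map_mul, map_ofNat,
      map_pow, pi_X1, pi_X3, pi_X4]
  · show (piMap (Del' (X 3)) : MvPolynomial (Fin 3) k) = Del (piMap (X 3))
    rw [Del'_X3, pi_X3, Del_r, map_neg, map_mul, pi_X4, pi_X5]
  · show (piMap (Del' (X 4)) : MvPolynomial (Fin 3) k) = Del (piMap (X 4))
    rw [Del'_X4, pi_X4, Del_f, map_zero]
  · show (piMap (Del' (X 5)) : MvPolynomial (Fin 3) k) = Del (piMap (X 5))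
    rw [Del'_X5, pi_X5, Del_g, map_zero]

lemma key (p : MvPolynomial (Fin 6) k) : piMap (Del' p) = Del (piMap p) := by
  induction p using MvPolynomial.induction_on with
  | C a => rw [Del'_C, map_zero, ← MvPolynomial.algebraMap_eq, AlgHom.commutes,
      MvPolynomial.algebraMap_eq, Del_C]
  | add p q hp hq => rw [Del'_add, map_add, map_add, Del_add, hp, hq]
  | mul_X p n hp =>
      rw [Del'_mul, map_add, map_mul, map_mul, map_mul, hp, key_gen, Del_mul]

lemma key_iter (u : k) (i : ℕ) (p : MvPolynomial (Fin 6) k) :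
    piMap ((fun q => u • Del' q)^[i] p) = (fun h => u • Del h)^[i] (piMap p) := by
  induction i generalizing p with
  | zero => rfl
  | succ n ih =>
      rw [Function.iterate_succ_apply, Function.iterate_succ_apply, ih]
      simp only [map_smul, key]

lemma smul_iter (u : k) (i : ℕ) (p : MvPolynomial (Fin 6) k) :
    (fun q => u • Del' q)^[i] p = u ^ i • Del'^[i] p := by
  induction i generalizing p with
  | zero => simp
  | succ n ih =>
      rw [Function.iterate_succ_apply', Function.iterate_succ_apply', ih,
        Del'_smul, smul_smul, ← pow_succ']

end Aux

/-- `π ∘ (uΔ') = (uΔ) ∘ π`, and consequently `π ∘ φ'_u = φ_u ∘ π`. -/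
theorem statement8 [CharZero k]
    (hln3 : ∀ h : MvPolynomial (Fin 3) k, ∃ l : ℕ, Del^[l] h = 0)
    (hln6 : ∀ p : MvPolynomial (Fin 6) k, ∃ l : ℕ, Del'^[l] p = 0)
    (u : k) (hu : u ≠ 0)
    (φu : MvPolynomial (Fin 3) k ≃ₐ[k] MvPolynomial (Fin 3) k)
    (hφu : IsExpOf (fun h => u • Del h) φu)
    (φ'u : MvPolynomial (Fin 6) k ≃ₐ[k] MvPolynomial (Fin 6) k)
    (hφ'u : IsExpOf (fun p => u • Del' p) φ'u) :
    (∀ p : MvPolynomial (Fin 6) k, piMap (u • Del' p) = u • Del (piMap p)) ∧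
    (∀ p : MvPolynomial (Fin 6) k, piMap (φ'u p) = φu (piMap p)) := by
  constructor
  · intro p; rw [map_smul, key]
  · intro p
    obtain ⟨l, hl⟩ := hln6 p
    have h0 : (fun q => u • Del' q)^[l] p = 0 := by rw [smul_iter, hl, smul_zero]
    have h3 : (fun h => u • Del h)^[l] (piMap p) = 0 := by
      rw [← key_iter, h0, map_zero]
    rw [hφ'u p l h0, hφu (piMap p) l h3, map_sum]
    refine Finset.sum_congr rfl fun i _ => ?_
    rw [map_smul, key_iter]

end YasudaPaper
end
end

section
/- For every integer γ ≥ 0, every integer δ ≥ 1, and every p ∈ P_{γ,δ}, the total degree of π(p) in k[x1,x2,x3] equals 5γ + 2δ. -/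
open MvPolynomial

noncomputable section

namespace YasudaPaper

variable {k : Type*} [Field k]

lemma deg_two : ((2 : MvPolynomial (Fin 3) k)).totalDegree = 0 := by
  have : ((2 : ℕ) : MvPolynomial (Fin 3) k) = 2 := by norm_num
  rw [← this, ← C_eq_coe_nat, totalDegree_C]

lemma deg_fP_le : (fP (k := k)).totalDegree ≤ 2 := by
  rw [fP, sub_eq_add_neg]
  apply (totalDegree_add _ _).trans
  simp only [max_le_iff, totalDegree_neg]
  exact ⟨(totalDegree_mul _ _).trans (by simp), by simp⟩

lemma deg_rP_le : (rP (k := k)).totalDegree ≤ 3 := by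
  rw [rP]
  apply (totalDegree_add _ _).trans
  simp only [max_le_iff]
  refine ⟨(totalDegree_mul _ _).trans ?_, by simp⟩
  have := deg_fP_le (k := k)
  simp only [totalDegree_X]
  omega

lemma deg_gP_le : (gP (k := k)).totalDegree ≤ 5 := by
  have hf := deg_fP_le (k := k)
  have hf2 := totalDegree_pow (fP (k := k)) 2
  rw [gP]
  apply (totalDegree_add _ _).trans
  simp only [max_le_iff]
  refine ⟨(totalDegree_add _ _).trans (max_le ((totalDegree_mul _ _).trans ?_) ((totalDegree_mul _ _).trans ?_)), by simp⟩
  · simp only [totalDegree_X]; omega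
  · have h2 : (2 * X 0 * X 1 : MvPolynomial (Fin 3) k).totalDegree ≤ 2 := by
      refine (totalDegree_mul _ _).trans ?_
      have : (2 * X 0 : MvPolynomial (Fin 3) k).totalDegree ≤ 1 :=
        (totalDegree_mul _ _).trans (by simp [deg_two])
      simp only [totalDegree_X]; omega
    omega

lemma deg_v_le (n : Fin 6) :
    ((![X 0, X 1, X 2, rP, fP, gP] : Fin 6 → MvPolynomial (Fin 3) k) n).totalDegree
      ≤ ![1, 1, 1, 3, 2, 5] n := by
  fin_cases n <;>
    simp [deg_rP_le, deg_fP_le, deg_gP_le,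
      show (![X 0, X 1, X 2, rP, fP, gP] : Fin 6 → MvPolynomial (Fin 3) k) 5 = gP from rfl,
      show (![1, 1, 1, 3, 2, 5] : Fin 6 → ℕ) 5 = 5 from by decide]

lemma tdeg_piMap_le (q : MvPolynomial (Fin 6) k) (b : ℕ)
    (h : ∀ m ∈ q.support, m 0 + m 1 + m 2 + 3 * m 3 + 2 * m 4 + 5 * m 5 ≤ b) :
    (piMap q).totalDegree ≤ b := by
  conv_lhs => rw [← q.support_sum_monomial_coeff, piMap, map_sum]
  apply totalDegree_finsetSum_le
  intro m hm
  rw [aeval_monomial]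
  refine (totalDegree_mul _ _).trans ?_
  rw [algebraMap_eq, totalDegree_C, zero_add]
  calc (m.prod fun n e => (![X 0, X 1, X 2, rP, fP, gP] : Fin 6 → MvPolynomial (Fin 3) k) n ^ e).totalDegree
      ≤ ∑ n ∈ m.support, ((![X 0, X 1, X 2, rP, fP, gP] : Fin 6 → MvPolynomial (Fin 3) k) n ^ m n).totalDegree := totalDegree_finset_prod _ _
    _ ≤ ∑ n ∈ m.support, m n * ![1, 1, 1, 3, 2, 5] n := by
        refine Finset.sum_le_sum fun n _ => (totalDegree_pow _ _).trans ?_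
        exact Nat.mul_le_mul_left _ (deg_v_le n)
    _ ≤ ∑ n : Fin 6, m n * ![1, 1, 1, 3, 2, 5] n :=
        Finset.sum_le_sum_of_subset (Finset.subset_univ _)
    _ ≤ b := by
        rw [Fin.sum_univ_six]
        have := h m hm
        simp only [show (![1, 1, 1, 3, 2, 5] : Fin 6 → ℕ) 0 = 1 from by decide,
          show (![1, 1, 1, 3, 2, 5] : Fin 6 → ℕ) 1 = 1 from by decide,
          show (![1, 1, 1, 3, 2, 5] : Fin 6 → ℕ) 2 = 1 from by decide,
          show (![1, 1, 1, 3, 2, 5] : Fin 6 → ℕ) 3 = 3 from by decide,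
          show (![1, 1, 1, 3, 2, 5] : Fin 6 → ℕ) 4 = 2 from by decide,
          show (![1, 1, 1, 3, 2, 5] : Fin 6 → ℕ) 5 = 5 from by decide]
        omega

lemma coeff_fP_pow (M : ℕ) :
    coeff (Finsupp.single 0 M + Finsupp.single 2 M) ((fP (k := k)) ^ M) = 1 := by
  induction M with
  | zero => simp
  | succ M ih =>
    have e1 : (Finsupp.single (0 : Fin 3) (M + 1) + Finsupp.single (2 : Fin 3) (M + 1))
        = (Finsupp.single (0 : Fin 3) M + Finsupp.single (2 : Fin 3) M)
          + (Finsupp.single (0 : Fin 3) 1 + Finsupp.single (2 : Fin 3) 1) := by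
      rw [Finsupp.single_add, Finsupp.single_add]; abel
    have hx02 : (X 0 * X 2 : MvPolynomial (Fin 3) k)
        = monomial (Finsupp.single 0 1 + Finsupp.single 2 1) 1 := by
      rw [X, X, monomial_mul, one_mul]
    rw [pow_succ]
    nth_rewrite 2 [fP]
    rw [mul_sub, e1, coeff_sub, hx02, coeff_mul_monomial, ih, one_mul,
      X_pow_eq_monomial, coeff_mul_monomial', if_neg, sub_zero]
    intro hle
    have h1 := hle 1
    simp [Finsupp.single_apply] at h1

lemma deg_sP_le : (2 * X 0 * X 1 * fP + X 0 ^ 3 : MvPolynomial (Fin 3) k).totalDegree ≤ 4 := by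
  apply (totalDegree_add _ _).trans
  apply max_le _ (by simp)
  refine (totalDegree_mul _ _).trans ?_
  have h2 : (2 * X 0 * X 1 : MvPolynomial (Fin 3) k).totalDegree ≤ 2 := by
    refine (totalDegree_mul _ _).trans ?_
    have : (2 * X 0 : MvPolynomial (Fin 3) k).totalDegree ≤ 1 :=
      (totalDegree_mul _ _).trans (by simp [deg_two])
    simp only [totalDegree_X]; omega
  have := deg_fP_le (k := k)
  omega

lemma deg_A_le : (X 2 * fP ^ 2 : MvPolynomial (Fin 3) k).totalDegree ≤ 5 := by
  refine (totalDegree_mul _ _).trans ?_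
  have := (totalDegree_pow (fP (k := k)) 2)
  have := deg_fP_le (k := k)
  simp only [totalDegree_X]
  omega

lemma musum (γ δ : ℕ) :
    ∑ i ∈ (Finsupp.single (0 : Fin 3) (2*γ+δ) + Finsupp.single (2 : Fin 3) (3*γ+δ)).support,
      (Finsupp.single (0 : Fin 3) (2*γ+δ) + Finsupp.single (2 : Fin 3) (3*γ+δ)) i
      = 5*γ + 2*δ := by
  rw [Finset.sum_subset (Finset.subset_univ _)
    (fun i _ hn => Finsupp.notMem_support_iff.mp hn), Fin.sum_univ_three]
  simp [Finsupp.single_apply]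
  omega

lemma coeff_main (γ δ : ℕ) :
    coeff (Finsupp.single 0 (2*γ+δ) + Finsupp.single 2 (3*γ+δ)) ((fP (k := k))^δ * gP^γ) = 1 := by
  have hgP : (gP (k := k)) = X 2 * fP^2 + (2*X 0*X 1*fP + X 0^3) := by rw [gP]; ring
  rw [hgP, add_pow, Finset.mul_sum, coeff_sum, Finset.sum_range_succ]
  have hlast : (fP (k := k))^δ * ((X 2 * fP^2)^γ * (2*X 0*X 1*fP + X 0^3)^(γ-γ)
        * ((γ.choose γ : ℕ) : MvPolynomial (Fin 3) k))
      = monomial (Finsupp.single 2 γ) 1 * fP^(2*γ+δ) := by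
    rw [Nat.sub_self, pow_zero, mul_one, Nat.choose_self, Nat.cast_one, mul_one,
      mul_pow, ← pow_mul, ← X_pow_eq_monomial]
    ring
  have eμ : (Finsupp.single (0 : Fin 3) (2*γ+δ) + Finsupp.single (2 : Fin 3) (3*γ+δ))
      = Finsupp.single (2 : Fin 3) γ
        + (Finsupp.single (0 : Fin 3) (2*γ+δ) + Finsupp.single (2 : Fin 3) (2*γ+δ)) := by
    ext i
    fin_cases i <;> simp [Finsupp.single_apply] <;> omega
  rw [hlast, eμ, coeff_monomial_mul, coeff_fP_pow, one_mul]
  rw [Finset.sum_eq_zero, zero_add]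
  intro j hj
  rw [Finset.mem_range] at hj
  apply coeff_eq_zero_of_totalDegree_lt
  rw [← eμ, musum]
  have h1 : ((fP (k := k))^δ).totalDegree ≤ δ * 2 :=
    (totalDegree_pow _ _).trans (Nat.mul_le_mul_left _ (deg_fP_le (k := k)))
  have h2 : ((X 2 * fP^2 : MvPolynomial (Fin 3) k)^j).totalDegree ≤ j * 5 :=
    (totalDegree_pow _ _).trans (Nat.mul_le_mul_left _ (deg_A_le (k := k)))
  have h3 : ((2*X 0*X 1*fP + X 0^3 : MvPolynomial (Fin 3) k)^(γ-j)).totalDegree ≤ (γ-j) * 4 :=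
    (totalDegree_pow _ _).trans (Nat.mul_le_mul_left _ (deg_sP_le (k := k)))
  have h4 : (((γ.choose j : ℕ)) : MvPolynomial (Fin 3) k).totalDegree = 0 := by
    rw [← C_eq_coe_nat, totalDegree_C]
  have t1 := totalDegree_mul ((fP (k := k))^δ)
    ((X 2 * fP^2)^j * (2*X 0*X 1*fP + X 0^3)^(γ-j) * (((γ.choose j : ℕ)) : MvPolynomial (Fin 3) k))
  have t2 := totalDegree_mul ((X 2 * fP^2 : MvPolynomial (Fin 3) k)^j * (2*X 0*X 1*fP + X 0^3)^(γ-j))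
    ((((γ.choose j : ℕ)) : MvPolynomial (Fin 3) k))
  have t3 := totalDegree_mul ((X 2 * fP^2 : MvPolynomial (Fin 3) k)^j)
    ((2*X 0*X 1*fP + X 0^3 : MvPolynomial (Fin 3) k)^(γ-j))
  omega

/-- (Lemma 1 of the paper.)  For `γ ≥ 0`, `δ ≥ 1` and
`p ∈ P_{γ,δ}`, the total degree of `π(p)` equals `5γ + 2δ`. -/
theorem statement10 [CharZero k] (γ δ : ℕ) (hδ : 1 ≤ δ)
    (p : MvPolynomial (Fin 6) k) (hp : p ∈ Pset γ δ) :
    (piMap p).totalDegree = 5 * γ + 2 * δ := by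
  obtain ⟨hp0, hw1, hw2, hlm⟩ := hp
  have hmemt : tfMon γ δ ∈ p.support := hlm.1
  have hc : coeff (tfMon γ δ) p ≠ 0 := mem_support_iff.mp hmemt
  set c := coeff (tfMon γ δ) p with hcdef
  have key : ∀ m ∈ p.support, m 0 + 2*m 1 + 3*m 2 + m 3 + m 5 ≤ γ ∧ m 4 ≤ δ := by
    intro m hm
    have h1 := (le_weightedTotalDegree w1 hm).trans hw1
    have h2 := (le_weightedTotalDegree w2 hm).trans hw2
    rw [Finsupp.weight_apply, Finsupp.sum_fintype _ _ (fun i => by simp),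
      Fin.sum_univ_six] at h1 h2
    simp only [show w1 0 = 1 from by decide, show w1 1 = 2 from by decide,
      show w1 2 = 3 from by decide, show w1 3 = 1 from by decide,
      show w1 4 = 0 from by decide, show w1 5 = 1 from by decide, smul_eq_mul] at h1
    simp only [show w2 0 = 0 from by decide, show w2 1 = 0 from by decide,
      show w2 2 = 0 from by decide, show w2 3 = 0 from by decide,
      show w2 4 = 1 from by decide, show w2 5 = 0 from by decide, smul_eq_mul] at h2
    omega
  have hub : (piMap p).totalDegree ≤ 5*γ+2*δ :=
    tdeg_piMap_le p _ (fun m hm => by obtain ⟨a, b⟩ := key m hm; omega)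
  set q := p - monomial (tfMon γ δ) c with hqdef
  have hpq : piMap p = piMap (monomial (tfMon γ δ) c) + piMap q := by
    rw [← map_add]; congr 1; rw [hqdef]; ring
  have hqsupp : ∀ m ∈ q.support, m ∈ p.support ∧ m ≠ tfMon γ δ := by
    intro m hm
    rw [mem_support_iff, hqdef, coeff_sub, coeff_monomial] at hm
    by_cases h : tfMon γ δ = m
    · rw [if_pos h, ← h, ← hcdef, sub_self] at hm; exact absurd rfl hm
    · rw [if_neg h, sub_zero] at hm
      exact ⟨mem_support_iff.mpr hm, fun hh => h hh.symm⟩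
  have hq : (piMap q).totalDegree ≤ 5*γ+2*δ-1 := by
    apply tdeg_piMap_le
    intro m hm
    obtain ⟨hmp, hne⟩ := hqsupp m hm
    obtain ⟨k1, k2⟩ := key m hmp
    have hne' : ¬(m 0 = 0 ∧ m 1 = 0 ∧ m 2 = 0 ∧ m 3 = 0 ∧ m 4 = δ ∧ m 5 = γ) := by
      rintro ⟨e0, e1, e2, e3, e4, e5⟩
      exact hne (Finsupp.ext fun i => by
        fin_cases i <;> simp [tfMon, Finsupp.single_apply, e0, e1, e2, e3, e4, e5])
    omega
  set μ : Fin 3 →₀ ℕ := Finsupp.single 0 (2*γ+δ) + Finsupp.single 2 (3*γ+δ) with hμ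
  have hcq : coeff μ (piMap q) = 0 := by
    apply coeff_eq_zero_of_totalDegree_lt
    have h5 := musum γ δ
    rw [hμ]
    omega
  have hmono1 : (monomial (tfMon γ δ) c : MvPolynomial (Fin 6) k) = C c * X 4 ^ δ * X 5 ^ γ := by
    rw [tfMon]
    simp [X_pow_eq_monomial, C_mul_monomial, monomial_mul]
  have hx4 : piMap (X 4 : MvPolynomial (Fin 6) k) = fP (k := k) := by simp [piMap]
  have hx5 : piMap (X 5 : MvPolynomial (Fin 6) k) = gP (k := k) := by
    simp [piMap, show (![X 0, X 1, X 2, rP, fP, gP] : Fin 6 → MvPolynomial (Fin 3) k) 5 = gP from rfl]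
  have hCc : piMap (C c : MvPolynomial (Fin 6) k) = C c := by simp [piMap]
  have hmain : coeff μ (piMap p) = c := by
    rw [hpq, coeff_add, hcq, add_zero, hmono1, map_mul, map_mul, map_pow, map_pow,
      hx4, hx5, hCc, mul_assoc, coeff_C_mul, hμ, coeff_main, mul_one]
  have hμs : μ ∈ (piMap p).support := mem_support_iff.mpr (by rw [hmain]; exact hc)
  have hlb := le_totalDegree hμs
  rw [show (μ.sum fun _ e => e) = ∑ i ∈ μ.support, μ i from rfl, hμ, musum] at hlb
  exact le_antisymm hub hlb


end YasudaPaper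
end
end
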